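/- A subset K ⊆ Stoch(A,A') of column-stochastic matrices is convex if and only if it has control. -/

import Mathlib

noncomputable section
open scoped Kronecker
attribute [local instance] Classical.propDecidable
attribute [local instance] FintypeCat.fintype

/-- Entrywise nonnegativity: a morphism of `Mat[ℝ₊]`. -/
def Nonneg {m n : Type} (f : Matrix m n ℝ) : Prop := ∀ i j, 0 ≤ f i j

/-- A column-stochastic matrix: a morphism of `Stoch`. -/
def IsStoch {m n : Type} [Fintype m] (f : Matrix m n ℝ) : Prop :=
  Nonneg f ∧ ∀ j, ∑ i, f i j = 1

/-- A probability vector. -/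
def IsProb {X : Type} [Fintype X] (ρ : X → ℝ) : Prop :=
  (∀ x, 0 ≤ ρ x) ∧ ∑ x, ρ x = 1

/-- Reduction of an extended map by a (generalised) state `ρ` on the input ancilla and a
(generalised) effect `σ` on the output ancilla. -/
def margE {A A' X X' : Type} [Fintype X] [Fintype X'] (Φ : Matrix (A' × X') (A × X) ℝ)
    (ρ : X → ℝ) (σ : X' → ℝ) : Matrix A' A ℝ :=
  Matrix.of fun a' a => ∑ x' : X', ∑ x : X, σ x' * Φ (a', x') (a, x) * ρ x

/-- Reduction by a state on the input ancilla and the discard on the output ancilla. -/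
def marg {A A' X X' : Type} [Fintype X] [Fintype X'] (Φ : Matrix (A' × X') (A × X) ℝ)
    (ρ : X → ℝ) : Matrix A' A ℝ :=
  margE Φ ρ (fun _ => 1)

/-- The dilation extension of a set `K ⊆ Stoch(A,A')` by ancillas `X, X'`. -/
def dExtS {A A' : Type} [Fintype A'] (K : Set (Matrix A' A ℝ))
    (X X' : Type) [Fintype X] [Fintype X'] : Set (Matrix (A' × X') (A × X) ℝ) :=
  {Φ | IsStoch Φ ∧ ∀ ρ : X → ℝ, IsProb ρ → marg Φ ρ ∈ K}

/-- Closure under convex combinations. -/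
def IsConvexSetS {A A' : Type} (K : Set (Matrix A' A ℝ)) : Prop :=
  ∀ φ₀ ∈ K, ∀ φ₁ ∈ K, ∀ p : ℝ, 0 ≤ p → p ≤ 1 → (p • φ₀ + (1 - p) • φ₁) ∈ K

/-- A normal set: one containing every discard-prepare map. -/
def IsNormalSetS {A A' : Type} [Fintype A'] (K : Set (Matrix A' A ℝ)) : Prop :=
  ∀ ρ : A' → ℝ, IsProb ρ → (Matrix.of fun a' (_ : A) => ρ a') ∈ K

/-- `(id_{A'} ⊗ g) · (Φ ⊗ id_Z) · (id_A ⊗ f)`, suppressing associativity isomorphisms. -/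
def slideS {A A' X X' Y Y' Z : Type} [Fintype A] [Fintype A'] [Fintype X] [Fintype X']
    [Fintype Y] [Fintype Y'] [Fintype Z]
    (f : Matrix (X × Z) Y ℝ) (g : Matrix Y' (X' × Z) ℝ)
    (Φ : Matrix (A' × X') (A × X) ℝ) : Matrix (A' × Y') (A × Y) ℝ :=
  ((1 : Matrix A' A' ℝ) ⊗ₖ g) *
    (Matrix.reindex (Equiv.prodAssoc A' X' Z) (Equiv.prodAssoc A X Z)
      (Φ ⊗ₖ (1 : Matrix Z Z ℝ))) *
    ((1 : Matrix A A ℝ) ⊗ₖ f)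

/-- A locally-applicable transformation of type `K → M` on `Stoch`. -/
structure LocAppS {A A' B B' : Type} [Fintype A] [Fintype A'] [Fintype B] [Fintype B']
    (K : Set (Matrix A' A ℝ)) (M : Set (Matrix B' B ℝ)) where
  app : ∀ (X X' : FintypeCat.{0}), ↥(dExtS K X X') → ↥(dExtS M X X')
  natural : ∀ (X X' Y Y' Z : FintypeCat.{0})
      (f : Matrix (X × Z) Y ℝ) (g : Matrix Y' (X' × Z) ℝ),
      IsStoch f → IsStoch g →
      ∀ (Φ : ↥(dExtS K X X')) (h : slideS f g Φ.1 ∈ dExtS K Y Y'),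
        (app Y Y' ⟨slideS f g Φ.1, h⟩).1 = slideS f g (app X X' Φ).1

/-- Reduction of a doubly-extended map by a state on the control ancilla and the discard
on its output. -/
def margCtrl {A A' X X' Y Y' : Type} [Fintype Y] [Fintype Y']
    (Φ : Matrix (A' × (X' × Y')) (A × (X × Y)) ℝ) (ρ : Y → ℝ) :
    Matrix (A' × X') (A × X) ℝ :=
  Matrix.of fun p q => ∑ y' : Y', ∑ y : Y, Φ (p.1, (p.2, y')) (q.1, (q.2, y)) * ρ y

/-- A set `K ⊆ Stoch(A,A')` has control if any two members of a common dilation extension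
arise as reductions of a single member by a pair of probability vectors. -/
def HasControlS {A A' : Type} [Fintype A] [Fintype A'] (K : Set (Matrix A' A ℝ)) : Prop :=
  ∀ (X X' : FintypeCat.{0}), ∀ φ₀ ∈ dExtS K X X', ∀ φ₁ ∈ dExtS K X X',
    ∃ (Y Y' : FintypeCat.{0}) (Φ : Matrix (A' × (X' × Y')) (A × (X × Y)) ℝ)
      (ρ₀ ρ₁ : Y → ℝ),
      Φ ∈ dExtS K (X × Y) (X' × Y') ∧ IsProb ρ₀ ∧ IsProb ρ₁ ∧
      margCtrl Φ ρ₀ = φ₀ ∧ margCtrl Φ ρ₁ = φ₁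

/-- The action of a `Mat[ℝ₊]`-supermap `S` (acting on vectorizations) on an extended
morphism, by tensor extension with the identity via the compact structure. -/
def supActS {A A' B B' X X' : Type} [Fintype A] [Fintype A']
    (S : Matrix (B × B') (A × A') ℝ) (Φ : Matrix (A' × X') (A × X) ℝ) :
    Matrix (B' × X') (B × X) ℝ :=
  Matrix.of fun p q => ∑ a : A, ∑ a' : A', S (q.1, p.1) (a, a') * Φ (a', p.2) (a, q.2)

/-- A `Mat[ℝ₊]`-supermap of type `K → M` on `Stoch`. -/
def IsSupermapS {A A' B B' : Type} [Fintype A] [Fintype A'] [Fintype B']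
    (K : Set (Matrix A' A ℝ)) (M : Set (Matrix B' B ℝ))
    (S : Matrix (B × B') (A × A') ℝ) : Prop :=
  Nonneg S ∧ ∀ (X X' : FintypeCat.{0}), ∀ Φ ∈ dExtS K X X', supActS S Φ ∈ dExtS M X X'

/-
Convexity gives control through the block-diagonal map `φ₀ ⊕ φ₁` controlled by a bit: a
probability vector on `X × Bool` reduces it to a sum of reductions of `φ₀` and `φ₁` by
sub-normalised vectors, i.e. to a convex combination of elements of `K`. Conversely, extend
`φ₀, φ₁ ∈ K` by trivial ancillas and control them by a single `Φ`; feeding `Φ` the mixture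
`p ρ₀ + (1 - p) ρ₁` of the two control states reduces it, by linearity, to `p φ₀ + (1 - p) φ₁`,
which therefore lies in `K`.
-/

open Finset

lemma isConvexSetS_iff_convex {A A' : Type} {K : Set (Matrix A' A ℝ)} :
    IsConvexSetS K ↔ Convex ℝ K := by
  refine ⟨fun h φ₀ h₀ φ₁ h₁ a b ha _ hab => ?_, fun h φ₀ h₀ φ₁ h₁ p hp0 hp1 =>
    h h₀ h₁ hp0 (sub_nonneg.2 hp1) (add_sub_cancel p 1)⟩
  obtain rfl : b = 1 - a := by linarith
  exact h φ₀ h₀ φ₁ h₁ a ha (by linarith)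

lemma isProb_iff_mem_stdSimplex {X : Type} [Fintype X] {ρ : X → ℝ} :
    IsProb ρ ↔ ρ ∈ stdSimplex ℝ X :=
  Iff.rfl

lemma IsProb.prod {X Y : Type} [Fintype X] [Fintype Y] {ξ : X → ℝ} {ρ : Y → ℝ}
    (hξ : IsProb ξ) (hρ : IsProb ρ) : IsProb fun z : X × Y => ξ z.1 * ρ z.2 :=
  ⟨fun z => mul_nonneg (hξ.1 z.1) (hρ.1 z.2), by
    rw [Fintype.sum_prod_type, ← sum_mul_sum, hξ.2, hρ.2, one_mul]⟩

section Marginal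

variable {A A' X X' : Type} [Fintype X] [Fintype X']

lemma marg_smul (Φ : Matrix (A' × X') (A × X) ℝ) (c : ℝ) (ρ : X → ℝ) :
    marg Φ (c • ρ) = c • marg Φ ρ := by
  ext a' a
  simp only [marg, margE, Matrix.of_apply, Matrix.smul_apply, Pi.smul_apply, smul_eq_mul,
    mul_sum]
  exact sum_congr rfl fun _ _ => sum_congr rfl fun _ _ => by ring

lemma marg_zero (Φ : Matrix (A' × X') (A × X) ℝ) : marg Φ 0 = 0 := by
  simpa using marg_smul Φ 0 0

lemma exists_mem_smul_eq_marg [Fintype A'] [Nonempty X] {K : Set (Matrix A' A ℝ)}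
    {Φ : Matrix (A' × X') (A × X) ℝ} (hΦ : Φ ∈ dExtS K X X') {ρ : X → ℝ}
    (hρ : ∀ x, 0 ≤ ρ x) : ∃ k ∈ K, (∑ x, ρ x) • k = marg Φ ρ := by
  by_cases hs : ∑ x, ρ x = 0
  · have hρ0 : ρ = 0 :=
      funext fun x => (sum_eq_zero_iff_of_nonneg fun x _ => hρ x).1 hs x (mem_univ x)
    obtain ⟨x⟩ := ‹Nonempty X›
    refine ⟨_, hΦ.2 _ (isProb_iff_mem_stdSimplex.2 (single_mem_stdSimplex ℝ x)), ?_⟩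
    rw [hs, hρ0, zero_smul, marg_zero]
  · refine ⟨_, hΦ.2 ((∑ x, ρ x)⁻¹ • ρ) ⟨fun x => ?_, ?_⟩, ?_⟩
    · exact mul_nonneg (inv_nonneg.2 (sum_nonneg fun x _ => hρ x)) (hρ x)
    · simp only [Pi.smul_apply, smul_eq_mul, ← mul_sum, inv_mul_cancel₀ hs]
    · rw [marg_smul, smul_smul, mul_inv_cancel₀ hs, one_smul]

end Marginal

section Controlled

variable {A A' X X' Y : Type} [Fintype Y] [DecidableEq Y]

def controlled (φ : Y → Matrix (A' × X') (A × X) ℝ) :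
    Matrix (A' × (X' × Y)) (A × (X × Y)) ℝ :=
  Matrix.reindex (Equiv.prodAssoc A' X' Y) (Equiv.prodAssoc A X Y) (Matrix.blockDiagonal φ)

variable {φ : Y → Matrix (A' × X') (A × X) ℝ}

lemma isStoch_controlled [Fintype A'] [Fintype X'] (hφ : ∀ y, IsStoch (φ y)) :
    IsStoch (controlled φ) := by
  refine ⟨fun p q => ?_, fun q => ?_⟩
  · simp only [controlled, Matrix.reindex_apply, Matrix.submatrix_apply,
      Matrix.blockDiagonal_apply]
    split_ifs
    exacts [(hφ _).1 _ _, le_rfl]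
  · rw [← (hφ q.2.2).2 (q.1, q.2.1)]
    simp [controlled, Matrix.blockDiagonal_apply, Fintype.sum_prod_type]

lemma marg_controlled [Fintype X] [Fintype X'] (φ : Y → Matrix (A' × X') (A × X) ℝ)
    (ρ : X × Y → ℝ) : marg (controlled φ) ρ = ∑ y, marg (φ y) fun x => ρ (x, y) := by
  ext a' a
  simp only [marg, margE, controlled, Matrix.reindex_apply, Matrix.submatrix_apply,
    Equiv.prodAssoc_symm_apply, Matrix.blockDiagonal_apply, mul_ite, one_mul, mul_zero, ite_mul,
    zero_mul, Fintype.sum_prod_type, sum_ite_eq, mem_univ, ↓reduceIte, Matrix.of_apply,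
    Matrix.sum_apply]
  exact sum_comm

lemma margCtrl_controlled_single (φ : Y → Matrix (A' × X') (A × X) ℝ) (y : Y) :
    margCtrl (controlled φ) (Pi.single y 1) = φ y := by
  ext p q
  simp [margCtrl, controlled, Matrix.blockDiagonal_apply, Pi.single_apply]

lemma controlled_mem_dExtS [Fintype A'] [Fintype X] [Fintype X'] {K : Set (Matrix A' A ℝ)}
    (hK : Convex ℝ K) (hφ : ∀ y, φ y ∈ dExtS K X X') :
    controlled φ ∈ dExtS K (X × Y) (X' × Y) := by
  refine ⟨isStoch_controlled fun y => (hφ y).1, fun ρ hρ => ?_⟩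
  have : Nonempty X := by
    by_contra hX
    rw [not_nonempty_iff] at hX
    simpa using hρ.2
  choose k hkK hk using fun y => exists_mem_smul_eq_marg (hφ y) fun x => hρ.1 (x, y)
  rw [marg_controlled]
  simp_rw [← hk]
  exact hK.sum_mem (fun y _ => sum_nonneg fun x _ => hρ.1 (x, y))
    (by rw [← Fintype.sum_prod_type_right, hρ.2]) fun y _ => hkK y

end Controlled

section TensorDiscard

variable {A A' X X' : Type}

def tensorDiscard (φ : Matrix A' A ℝ) : Matrix (A' × X') (A × X) ℝ :=
  Matrix.of fun p q => φ p.1 q.1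

lemma tensorDiscard_add (φ ψ : Matrix A' A ℝ) :
    (tensorDiscard (φ + ψ) : Matrix (A' × X') (A × X) ℝ) = tensorDiscard φ + tensorDiscard ψ :=
  rfl

lemma tensorDiscard_smul (c : ℝ) (φ : Matrix A' A ℝ) :
    (tensorDiscard (c • φ) : Matrix (A' × X') (A × X) ℝ) = c • tensorDiscard φ :=
  rfl

lemma marg_tensorDiscard [Fintype X] [Fintype X'] [Unique X'] (φ : Matrix A' A ℝ)
    (ξ : X → ℝ) : marg (tensorDiscard φ : Matrix (A' × X') (A × X) ℝ) ξ = (∑ x, ξ x) • φ := by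
  ext a' a
  simp [marg, margE, tensorDiscard, ← mul_sum, mul_comm]

lemma tensorDiscard_mem_dExtS [Fintype A'] [Fintype X] [Fintype X'] [Unique X']
    {K : Set (Matrix A' A ℝ)} {φ : Matrix A' A ℝ} (hφ : IsStoch φ) (hφK : φ ∈ K) :
    tensorDiscard φ ∈ dExtS K X X' :=
  ⟨⟨fun p q => hφ.1 p.1 q.1, fun q => by
      simpa [tensorDiscard, Fintype.sum_prod_type] using hφ.2 q.1⟩,
    fun ξ hξ => by rwa [marg_tensorDiscard, hξ.2, one_smul]⟩

end TensorDiscard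

section ControlReduction

variable {A A' X X' Y Y' : Type} [Fintype Y] [Fintype Y']

lemma marg_margCtrl [Fintype X] [Fintype X'] (Φ : Matrix (A' × (X' × Y')) (A × (X × Y)) ℝ)
    (ξ : X → ℝ) (ρ : Y → ℝ) : marg (margCtrl Φ ρ) ξ = marg Φ fun z => ξ z.1 * ρ z.2 := by
  ext a' a
  simp only [marg, margE, margCtrl, Matrix.of_apply, Fintype.sum_prod_type, one_mul, sum_mul]
  refine sum_congr rfl fun x' _ => ?_
  rw [sum_comm]
  exact sum_congr rfl fun _ _ => sum_congr rfl fun _ _ => sum_congr rfl fun _ _ => by ring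

lemma margCtrl_add (Φ : Matrix (A' × (X' × Y')) (A × (X × Y)) ℝ) (ρ σ : Y → ℝ) :
    margCtrl Φ (ρ + σ) = margCtrl Φ ρ + margCtrl Φ σ := by
  ext p q
  simp only [margCtrl, Matrix.of_apply, Matrix.add_apply, Pi.add_apply, mul_add, sum_add_distrib]

lemma margCtrl_smul (Φ : Matrix (A' × (X' × Y')) (A × (X × Y)) ℝ) (c : ℝ) (ρ : Y → ℝ) :
    margCtrl Φ (c • ρ) = c • margCtrl Φ ρ := by
  ext p q
  simp only [margCtrl, Matrix.of_apply, Matrix.smul_apply, Pi.smul_apply, smul_eq_mul, mul_sum]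
  exact sum_congr rfl fun _ _ => sum_congr rfl fun _ _ => by ring

end ControlReduction

section Control

variable {A A' : Type} [Fintype A] [Fintype A'] {K : Set (Matrix A' A ℝ)}

theorem IsConvexSetS.hasControlS (hK : IsConvexSetS K) : HasControlS K := by
  intro X X' φ₀ hφ₀ φ₁ hφ₁
  -- `FintypeCat.of Bool` must carry `FintypeCat.fintype`, which is not defeq to `Bool.fintype`.
  let _ : Fintype (FintypeCat.of Bool) := FintypeCat.fintype
  exact ⟨FintypeCat.of Bool, FintypeCat.of Bool, controlled fun b => cond b φ₁ φ₀,
    Pi.single false 1, Pi.single true 1,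
    controlled_mem_dExtS (isConvexSetS_iff_convex.1 hK) (Bool.forall_bool.2 ⟨hφ₀, hφ₁⟩),
    isProb_iff_mem_stdSimplex.2 (single_mem_stdSimplex ℝ _),
    isProb_iff_mem_stdSimplex.2 (single_mem_stdSimplex ℝ _),
    margCtrl_controlled_single _ _, margCtrl_controlled_single _ _⟩

theorem HasControlS.isConvexSetS (hK : ∀ φ ∈ K, IsStoch φ) (hc : HasControlS K) :
    IsConvexSetS K := by
  intro φ₀ hφ₀ φ₁ hφ₁ p hp0 hp1
  let _ : Fintype (FintypeCat.of Unit) := FintypeCat.fintype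
  obtain ⟨Y, Y', Φ, ρ₀, ρ₁, hΦ, hρ₀, hρ₁, h₀, h₁⟩ :=
    hc (FintypeCat.of Unit) (FintypeCat.of Unit) _ (tensorDiscard_mem_dExtS (hK φ₀ hφ₀) hφ₀)
      _ (tensorDiscard_mem_dExtS (hK φ₁ hφ₁) hφ₁)
  have hξ : IsProb (Pi.single () 1 : FintypeCat.of Unit → ℝ) :=
    isProb_iff_mem_stdSimplex.2 (single_mem_stdSimplex ℝ _)
  have hρ : IsProb (p • ρ₀ + (1 - p) • ρ₁) := isProb_iff_mem_stdSimplex.2 <|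
    convex_stdSimplex ℝ Y hρ₀ hρ₁ hp0 (sub_nonneg.2 hp1) (add_sub_cancel p 1)
  have hmem := hΦ.2 _ (hξ.prod hρ)
  rwa [← marg_margCtrl, margCtrl_add, margCtrl_smul, margCtrl_smul, h₀, h₁,
    ← tensorDiscard_smul, ← tensorDiscard_smul, ← tensorDiscard_add, marg_tensorDiscard, hξ.2,
    one_smul] at hmem

end Control

/-- **Statement 12.** A subset `K ⊆ Stoch(A,A')` of column-stochastic matrices is convex
if and only if it has control. -/
theorem stoch_convex_iff_control (A A' : FintypeCat.{0})
    (K : Set (Matrix A' A ℝ)) (hK : ∀ φ ∈ K, IsStoch φ) :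
    IsConvexSetS K ↔ HasControlS K :=
  ⟨IsConvexSetS.hasControlS, HasControlS.isConvexSetS hK⟩
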